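/- arXiv:2202.12918 — 10 statements merged into one kernel-verified Lean document; each statement's English description precedes it below -/
import Mathlib

section
/- If the n items admit a bin packing into k bins (a partition of Fin n into k nonempty parts each of total size at most 1), then there exists a feasible solution σ of the reduced EVSP instance in which every item customer is served and the set of vehicles that serve at least one item customer has cardinality exactly k. -/
open Finset

/-- A bin packing of the `n` items with sizes `ℓ` : a collection `P` of bins (finsets of items)
such that every bin is nonempty, the total size of each bin is at most `1`, and every item
belongs to exactly one bin (i.e. `P` is a partition of `Fin n`). -/
def IsBinPacking (n : ℕ) (ℓ : Fin n → ℝ) (P : Finset (Finset (Fin n))) : Prop :=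
  (∀ p ∈ P, p.Nonempty) ∧ (∀ p ∈ P, ∑ i ∈ p, ℓ i ≤ 1) ∧
  (∀ i : Fin n, ∃! p : Finset (Fin n), p ∈ P ∧ i ∈ p)

/-- The optimal number of bins for the bin packing problem. -/
noncomputable def optBPP (n : ℕ) (ℓ : Fin n → ℝ) : ℕ :=
  sInf {k : ℕ | ∃ P : Finset (Finset (Fin n)), IsBinPacking n ℓ P ∧ P.card = k}

/-- A feasible solution of the reduced EVSP instance: customers are `Fin n ⊕ Fin n`
(`Sum.inl i` is item customer `i`, `Sum.inr j` is dummy customer `j`); `σ c = some v` means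
customer `c` is served by vehicle `v`, `σ c = none` means `c` is unserved.
(i) each vehicle's item customers have total energy at most `1` (the battery capacity);
(ii) a vehicle serving a dummy customer serves no other customer. -/
def Feasible (n : ℕ) (ℓ : Fin n → ℝ) (σ : Fin n ⊕ Fin n → Option (Fin n)) : Prop :=
  (∀ v : Fin n, ∑ i ∈ Finset.univ.filter (fun i : Fin n => σ (Sum.inl i) = some v), ℓ i ≤ 1) ∧
  (∀ v j : Fin n, σ (Sum.inr j) = some v →
    ∀ c : Fin n ⊕ Fin n, c ≠ Sum.inr j → σ c ≠ some v)

/-- The number of customers served by `σ`. -/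
def servedCount (n : ℕ) (σ : Fin n ⊕ Fin n → Option (Fin n)) : ℕ :=
  (Finset.univ.filter (fun c : Fin n ⊕ Fin n => σ c ≠ none)).card

/-- The number of dummy customers served by `σ`. -/
def dummyServed (n : ℕ) (σ : Fin n ⊕ Fin n → Option (Fin n)) : ℕ :=
  (Finset.univ.filter (fun j : Fin n => σ (Sum.inr j) ≠ none)).card

/-- The set of vehicles that serve at least one item customer under `σ`. -/
def itemVehicles (n : ℕ) (σ : Fin n ⊕ Fin n → Option (Fin n)) : Finset (Fin n) :=
  Finset.univ.filter (fun v : Fin n => ∃ i : Fin n, σ (Sum.inl i) = some v)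

/-- If the items admit a bin packing into `k` bins, then there is a feasible solution of the
reduced EVSP instance serving every item customer, in which exactly `k` vehicles serve at least
one item customer. -/
theorem stmt_0 (n k : ℕ) (hn : 1 ≤ n) (ℓ : Fin n → ℝ)
    (hℓ : ∀ i : Fin n, 0 < ℓ i ∧ ℓ i ≤ 1)
    (hpack : ∃ P : Finset (Finset (Fin n)), IsBinPacking n ℓ P ∧ P.card = k) :
    ∃ σ : Fin n ⊕ Fin n → Option (Fin n), Feasible n ℓ σ ∧
      (∀ i : Fin n, σ (Sum.inl i) ≠ none) ∧
      (itemVehicles n σ).card = k := by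
  classical
  obtain ⟨P, ⟨hne, hsum, huniq⟩, hk⟩ := hpack
  have hbin : ∀ i : Fin n, ∃ p, p ∈ P ∧ i ∈ p := fun i => (huniq i).exists
  set b : Fin n → Finset (Fin n) := fun i => (hbin i).choose with hb
  have hbP : ∀ i, b i ∈ P := fun i => (hbin i).choose_spec.1
  have hbi : ∀ i, i ∈ b i := fun i => (hbin i).choose_spec.2
  have hbeq : ∀ i p, p ∈ P → i ∈ p → b i = p := fun i p hp hip =>
    (huniq i).unique ⟨hbP i, hbi i⟩ ⟨hp, hip⟩
  have hmin : ∀ p (hp : p ∈ P), p.min' (hne p hp) ∈ p := fun p hp => Finset.min'_mem _ _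
  have hinj : ∀ p q (hp : p ∈ P) (hq : q ∈ P),
      p.min' (hne p hp) = q.min' (hne q hq) → p = q := by
    intro p q hp hq h
    have h1 : p.min' (hne p hp) ∈ q := h ▸ hmin q hq
    have e1 := hbeq _ p hp (hmin p hp)
    have e2 := hbeq _ q hq h1
    rw [← e1, e2]
  set σ : Fin n ⊕ Fin n → Option (Fin n) := fun c =>
    match c with
    | Sum.inl i => some ((b i).min' (hne _ (hbP i)))
    | Sum.inr _ => none with hσ
  refine ⟨σ, ⟨?_, ?_⟩, ?_, ?_⟩
  · intro v
    set S := Finset.univ.filter (fun i : Fin n => σ (Sum.inl i) = some v) with hS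
    by_cases hSne : S.Nonempty
    · obtain ⟨i0, hi0⟩ := hSne
      have hi0' : (b i0).min' (hne _ (hbP i0)) = v := by
        have := (Finset.mem_filter.mp hi0).2
        simpa [hσ] using this
      have hsub : S ⊆ b i0 := by
        intro j hj
        have hj' : (b j).min' (hne _ (hbP j)) = v := by
          have := (Finset.mem_filter.mp hj).2
          simpa [hσ] using this
        have : b j = b i0 := hinj _ _ (hbP j) (hbP i0) (by rw [hj', hi0'])
        exact this ▸ hbi j
      calc ∑ i ∈ S, ℓ i ≤ ∑ i ∈ b i0, ℓ i :=
            Finset.sum_le_sum_of_subset_of_nonneg hsub (fun i _ _ => (hℓ i).1.le)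
        _ ≤ 1 := hsum _ (hbP i0)
    · rw [Finset.not_nonempty_iff_eq_empty.mp hSne, Finset.sum_empty]; exact zero_le_one
  · intro v j hjv
    simp [hσ] at hjv
  · intro i
    simp [hσ]
  · have himg : itemVehicles n σ = P.attach.image (fun p : {x // x ∈ P} => p.1.min' (hne _ p.2)) := by
      ext v
      simp only [itemVehicles, Finset.mem_filter, Finset.mem_univ, true_and,
        Finset.mem_image, Finset.mem_attach]
      constructor
      · rintro ⟨i, hi⟩
        exact ⟨⟨b i, hbP i⟩, by simpa [hσ] using hi⟩
      · rintro ⟨⟨p, hp⟩, hpv⟩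
        obtain ⟨i, hip⟩ := hne p hp
        refine ⟨i, ?_⟩
        have : b i = p := hbeq i p hp hip
        simp only [hσ, Option.some_inj, ← hpv]
        congr 1
    rw [himg, Finset.card_image_of_injOn, Finset.card_attach, hk]
    intro p _ q _ h
    exact Subtype.ext (hinj _ _ p.2 q.2 h)
end

section
/- The maximum, over all feasible solutions σ of the reduced EVSP instance, of the number of served customers equals 2n − opt_BPP. -/
open Finset

/-!
For a feasible solution, let `V` be the set of vehicles serving items. Distinct served dummies
need distinct vehicles outside `V`, so at most `n - |V|` dummies are served; and the item loads of
the vehicles in `V`, together with one singleton bin per unserved item, form a bin packing, so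
`opt ≤ |V| + #unserved items`. Adding up gives `served + opt ≤ 2n`. Conversely, number the bins of
an optimal packing by `opt` of the vehicles: all `n` items are served, and each of the `n - opt`
idle vehicles serves one dummy.
-/

section

variable {n : ℕ} {ℓ : Fin n → ℝ}

def RespectsCapacity {β : Type*} [DecidableEq β] (ℓ : Fin n → ℝ) (f : Fin n → β) : Prop :=
  ∀ b, ∑ i ∈ univ.filter (fun i => f i = b), ℓ i ≤ 1

section Packing

variable {β : Type*} [DecidableEq β] {f : Fin n → β}

lemma isBinPacking_image_fiber (hf : RespectsCapacity ℓ f) :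
    IsBinPacking n ℓ ((univ.image f).image fun b => univ.filter (fun i => f i = b)) := by
  refine ⟨?_, ?_, fun i => ⟨univ.filter (fun j => f j = f i), ?_, ?_⟩⟩
  · simp only [mem_image, mem_univ, true_and]
    rintro _ ⟨_, ⟨i, rfl⟩, rfl⟩
    exact ⟨i, by simp⟩
  · simp only [mem_image, mem_univ, true_and]
    rintro _ ⟨b, -, rfl⟩
    exact hf b
  · simp
  · simp only [mem_image, mem_univ, true_and]
    rintro _ ⟨⟨_, ⟨j, rfl⟩, rfl⟩, hij⟩
    rw [(mem_filter.mp hij).2]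

lemma card_image_fiber :
    #((univ.image f).image fun b => univ.filter (fun i => f i = b)) = #(univ.image f) := by
  refine card_image_of_injOn ?_
  simp only [Set.InjOn, coe_image, coe_univ, Set.image_univ, Set.mem_range]
  rintro _ ⟨i, rfl⟩ b - hfib
  have : i ∈ univ.filter (fun j => f j = b) := hfib ▸ by simp
  exact (mem_filter.mp this).2

lemma optBPP_le_card_image (hf : RespectsCapacity ℓ f) : optBPP n ℓ ≤ #(univ.image f) :=
  Nat.sInf_le ⟨_, isBinPacking_image_fiber hf, card_image_fiber⟩

end Packing

lemma respectsCapacity_id (hℓ : ∀ i, ℓ i ≤ 1) : RespectsCapacity ℓ (id : Fin n → Fin n) := by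
  intro v
  simpa [filter_eq'] using hℓ v

lemma IsBinPacking.exists_respectsCapacity {P : Finset (Finset (Fin n))}
    (hP : IsBinPacking n ℓ P) (hPn : #P ≤ n) :
    ∃ f : Fin n → Fin n, RespectsCapacity ℓ f ∧ #(univ.image f) = #P := by
  choose bin hbin using fun i => (hP.2.2 i).exists
  let e : P ↪ Fin n := P.equivFin.toEmbedding.trans (Fin.castLEEmb hPn)
  let binOf (i : Fin n) : P := ⟨bin i, (hbin i).1⟩
  have binOf_eq_iff (i : Fin n) (p : P) : binOf i = p ↔ i ∈ p.1 :=
    ⟨fun h => h ▸ (hbin i).2,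
      fun h => Subtype.ext ((hP.2.2 i).unique (hbin i) ⟨p.2, h⟩)⟩
  have binOf_surjective : Function.Surjective binOf := fun p => by
    obtain ⟨i, hi⟩ := hP.1 p.1 p.2
    exact ⟨i, (binOf_eq_iff i p).2 hi⟩
  refine ⟨fun i => e (binOf i), fun v => ?_, ?_⟩
  · by_cases hv : ∃ p, e p = v
    · obtain ⟨p, rfl⟩ := hv
      have : univ.filter (fun i => e (binOf i) = e p) = p.1 := by
        ext i
        simp [e.injective.eq_iff, binOf_eq_iff]
      rw [this]
      exact hP.2.1 p.1 p.2
    · have : univ.filter (fun i => e (binOf i) = v) = ∅ :=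
        filter_false_of_mem fun i _ h => hv ⟨binOf i, h⟩
      simp [this]
  · change #(univ.image (e ∘ binOf)) = #P
    rw [← image_image, image_univ_of_surjective binOf_surjective,
      card_image_of_injective _ e.injective, card_univ, Fintype.card_coe]

lemma exists_respectsCapacity_card_image_eq_optBPP (hℓ : ∀ i, ℓ i ≤ 1) :
    ∃ f : Fin n → Fin n, RespectsCapacity ℓ f ∧ #(univ.image f) = optBPP n ℓ := by
  have hid := respectsCapacity_id hℓ
  obtain ⟨P, hP, hPcard⟩ : optBPP n ℓ ∈ {k | ∃ P, IsBinPacking n ℓ P ∧ #P = k} :=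
    Nat.sInf_mem ⟨_, _, isBinPacking_image_fiber hid, rfl⟩
  have hopt : optBPP n ℓ ≤ n := by
    simpa using optBPP_le_card_image hid
  rw [← hPcard] at hopt ⊢
  exact hP.exists_respectsCapacity hopt

section Solutions

lemma servedCount_eq_add_dummyServed (σ : Fin n ⊕ Fin n → Option (Fin n)) :
    servedCount n σ = #(univ.filter fun i => σ (Sum.inl i) ≠ none) + dummyServed n σ := by
  rw [servedCount, dummyServed, ← card_toLeft_add_card_toRight]
  congr 2 <;> ext <;> simp

variable {σ : Fin n ⊕ Fin n → Option (Fin n)}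

/-- Distinct served dummy customers occupy distinct vehicles, none of which serves an item. -/
lemma Feasible.dummyServed_add_card_itemVehicles_le (hσ : Feasible n ℓ σ) :
    dummyServed n σ + #(itemVehicles n σ) ≤ n := by
  suffices dummyServed n σ ≤ #(itemVehicles n σ)ᶜ by
    have hle := card_le_univ (itemVehicles n σ)
    simp only [card_compl, Fintype.card_fin] at this hle
    omega
  refine card_le_card_of_injOn (fun j => (σ (Sum.inr j)).getD j) ?_ ?_
  · intro j hj
    obtain ⟨v, hv⟩ := Option.ne_none_iff_exists'.mp (mem_filter.mp hj).2
    simp only [hv, Option.getD_some, coe_compl, Set.mem_compl_iff, mem_coe, itemVehicles,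
      mem_filter, mem_univ, true_and, not_exists]
    exact fun i => hσ.2 v j hv (Sum.inl i) Sum.inl_ne_inr
  · intro j₁ hj₁ j₂ hj₂ heq
    obtain ⟨v, hv₁⟩ := Option.ne_none_iff_exists'.mp (mem_filter.mp hj₁).2
    obtain ⟨w, hv₂⟩ := Option.ne_none_iff_exists'.mp (mem_filter.mp hj₂).2
    simp only [hv₁, hv₂, Option.getD_some] at heq
    subst heq
    by_contra hne
    exact hσ.2 v j₁ hv₁ (Sum.inr j₂) (by simpa [eq_comm] using hne) hv₂

/-- Each vehicle serving items is a bin, and each unserved item is a bin of its own. -/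
lemma Feasible.optBPP_le (hℓ : ∀ i, ℓ i ≤ 1) (hσ : Feasible n ℓ σ) :
    optBPP n ℓ ≤ #(itemVehicles n σ) + #(univ.filter fun i => σ (Sum.inl i) = none) := by
  let bin (i : Fin n) : Fin n ⊕ Fin n := (σ (Sum.inl i)).elim (Sum.inr i) Sum.inl
  have hcap : RespectsCapacity ℓ bin := by
    rintro (v | j)
    · convert hσ.1 v using 3 with i
      cases h : σ (Sum.inl i) <;> simp [bin, h]
    · have hsub : univ.filter (fun i => bin i = Sum.inr j) ⊆ {j} := by
        intro i
        cases h : σ (Sum.inl i) <;> simp [bin, h]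
      rcases subset_singleton_iff.mp hsub with h | h <;> simp [h, hℓ]
  have himage : univ.image bin ⊆
      (itemVehicles n σ).disjSum (univ.filter fun i => σ (Sum.inl i) = none) := by
    intro b
    simp only [mem_image, mem_univ, true_and]
    rintro ⟨i, rfl⟩
    cases h : σ (Sum.inl i)
    · simp [bin, h]
    · simpa [bin, h, itemVehicles] using ⟨i, h⟩
  calc optBPP n ℓ ≤ #(univ.image bin) := optBPP_le_card_image hcap
    _ ≤ _ := (card_le_card himage).trans_eq (card_disjSum _ _)

def solutionOfAssignment (f : Fin n → Fin n) : Fin n ⊕ Fin n → Option (Fin n) :=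
  Sum.elim (fun i => some (f i)) (fun j => if j ∈ univ.image f then none else some j)

lemma feasible_solutionOfAssignment {f : Fin n → Fin n} (hf : RespectsCapacity ℓ f) :
    Feasible n ℓ (solutionOfAssignment f) := by
  refine ⟨fun v => by simpa [solutionOfAssignment] using hf v, ?_⟩
  intro v j hj c hc
  obtain ⟨hidle, rfl⟩ : (∀ i, f i ≠ j) ∧ j = v := by simpa [solutionOfAssignment] using hj
  rcases c with i | j'
  · simpa [solutionOfAssignment] using hidle i
  · have : j' ≠ j := fun h => hc (h ▸ rfl)
    simp [solutionOfAssignment, this]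

lemma servedCount_solutionOfAssignment (f : Fin n → Fin n) :
    servedCount n (solutionOfAssignment f) = 2 * n - #(univ.image f) := by
  have hitems : #(univ.filter fun i => solutionOfAssignment f (Sum.inl i) ≠ none) = n := by
    simp [solutionOfAssignment]
  have hdummies : dummyServed n (solutionOfAssignment f) = #(univ.image f)ᶜ := by
    rw [dummyServed]
    congr 1
    ext j
    simp [solutionOfAssignment]
  have hle := card_le_univ (univ.image f)
  rw [servedCount_eq_add_dummyServed, hitems, hdummies, card_compl]
  simp only [Fintype.card_fin] at hle ⊢
  omega

end Solutions

end

theorem stmt_1_general (n : ℕ) (ℓ : Fin n → ℝ)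
    (hℓ : ∀ i : Fin n, 0 < ℓ i ∧ ℓ i ≤ 1) :
    IsGreatest {m : ℕ | ∃ σ : Fin n ⊕ Fin n → Option (Fin n),
        Feasible n ℓ σ ∧ servedCount n σ = m}
      (2 * n - optBPP n ℓ) := by
  have hℓ₁ : ∀ i, ℓ i ≤ 1 := fun i => (hℓ i).2
  constructor
  · obtain ⟨f, hf, hcard⟩ := exists_respectsCapacity_card_image_eq_optBPP hℓ₁
    exact ⟨_, feasible_solutionOfAssignment hf, hcard ▸ servedCount_solutionOfAssignment f⟩
  · rintro _ ⟨σ, hσ, rfl⟩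
    have hbins := hσ.optBPP_le hℓ₁
    have hvehicles := hσ.dummyServed_add_card_itemVehicles_le
    have hitems := card_filter_add_card_filter_not (s := univ) (fun i => σ (Sum.inl i) = none)
    simp only [card_univ, Fintype.card_fin, ← ne_eq] at hitems
    rw [servedCount_eq_add_dummyServed]
    omega

/-- The maximum number of served customers over all feasible solutions of the reduced EVSP
instance equals `2 * n - optBPP`. -/
theorem stmt_1 (n : ℕ) (hn : 1 ≤ n) (ℓ : Fin n → ℝ)
    (hℓ : ∀ i : Fin n, 0 < ℓ i ∧ ℓ i ≤ 1) :
    IsGreatest {m : ℕ | ∃ σ : Fin n ⊕ Fin n → Option (Fin n),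
        Feasible n ℓ σ ∧ servedCount n σ = m}
      (2 * n - optBPP n ℓ) :=
  stmt_1_general n ℓ hℓ
end

section
/- If the n items admit a bin packing into k bins, then there exists a feasible solution of the reduced EVSP instance whose number of served customers is at least 2n − k. -/
open Finset

/-- If the items admit a bin packing into `k` bins, then there is a feasible solution of the
reduced EVSP instance serving at least `2 * n - k` customers. -/
theorem stmt_2 (n k : ℕ) (hn : 1 ≤ n) (ℓ : Fin n → ℝ)
    (hℓ : ∀ i : Fin n, 0 < ℓ i ∧ ℓ i ≤ 1)
    (hpack : ∃ P : Finset (Finset (Fin n)), IsBinPacking n ℓ P ∧ P.card = k) :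
    ∃ σ : Fin n ⊕ Fin n → Option (Fin n), Feasible n ℓ σ ∧
      2 * n - k ≤ servedCount n σ := by
  classical
  obtain ⟨P, ⟨hne, hsum, huniq⟩, hcard⟩ := hpack
  have hb : ∀ i, ∃ p, p ∈ P ∧ i ∈ p := fun i => (huniq i).exists
  set b : Fin n → Finset (Fin n) := fun i => (hb i).choose with hbdef
  have hbP : ∀ i, b i ∈ P := fun i => (hb i).choose_spec.1
  have hbi : ∀ i, i ∈ b i := fun i => (hb i).choose_spec.2
  set m : Finset (Fin n) → Fin n :=
    fun p => if h : p.Nonempty then p.min' h else ⟨0, hn⟩ with hmdef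
  have hmp : ∀ p ∈ P, m p ∈ p := by
    intro p hp
    simp only [hmdef, dif_pos (hne p hp)]
    exact p.min'_mem _
  have hminj : ∀ p ∈ P, ∀ q ∈ P, m p = m q → p = q := by
    intro p hp q hq h
    have h1 := hmp p hp
    have h2 := hmp q hq
    rw [h] at h1
    exact ((huniq (m q)).unique ⟨hp, h1⟩ ⟨hq, h2⟩)
  set S : Finset (Fin n) := P.image m with hSdef
  have hScard : S.card = k := by
    rw [hSdef, Finset.card_image_of_injOn hminj, hcard]
  have hkn : k ≤ n := by
    calc k = S.card := hScard.symm
    _ ≤ (Finset.univ : Finset (Fin n)).card := Finset.card_le_card (Finset.subset_univ _)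
    _ = n := Finset.card_univ.trans (Fintype.card_fin n)
  set σ : Fin n ⊕ Fin n → Option (Fin n) := fun c =>
    match c with
    | Sum.inl i => some (m (b i))
    | Sum.inr j => if j ∈ S then none else some j with hσdef
  refine ⟨σ, ⟨?_, ?_⟩, ?_⟩
  · intro v
    by_cases hv : ∃ p ∈ P, m p = v
    · obtain ⟨p, hp, hmpv⟩ := hv
      have hsub : Finset.univ.filter (fun i : Fin n => σ (Sum.inl i) = some v) ⊆ p := by
        intro i hi
        simp only [Finset.mem_filter, hσdef, Option.some_inj] at hi
        have : b i = p := hminj _ (hbP i) _ hp (hi.2.trans hmpv.symm)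
        exact this ▸ hbi i
      calc ∑ i ∈ Finset.univ.filter (fun i : Fin n => σ (Sum.inl i) = some v), ℓ i
          ≤ ∑ i ∈ p, ℓ i := Finset.sum_le_sum_of_subset_of_nonneg hsub
            (fun i _ _ => (hℓ i).1.le)
        _ ≤ 1 := hsum p hp
    · have : Finset.univ.filter (fun i : Fin n => σ (Sum.inl i) = some v) = ∅ := by
        ext i
        simp only [Finset.mem_filter, Finset.mem_univ, true_and, Finset.notMem_empty,
          iff_false, hσdef, Option.some_inj]
        intro h
        exact hv ⟨b i, hbP i, h⟩
      rw [this, Finset.sum_empty]; norm_num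
  · intro v j hj c hc
    simp only [hσdef] at hj
    by_cases hjS : j ∈ S
    · simp [hjS] at hj
    · simp only [if_neg hjS, Option.some_inj] at hj
      subst hj
      match c with
      | Sum.inl i =>
        simp only [hσdef, ne_eq, Option.some_inj]
        intro h
        exact hjS (h ▸ Finset.mem_image_of_mem m (hbP i))
      | Sum.inr j' =>
        simp only [hσdef]
        by_cases hj' : j' ∈ S
        · simp [hj']
        · simp only [if_neg hj', ne_eq, Option.some_inj]
          intro h
          exact hc (by rw [h])
  · have hcount : servedCount n σ =
        n + (Finset.univ.filter (fun j : Fin n => j ∉ S)).card := by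
      unfold servedCount
      rw [Finset.card_filter]
      rw [Fintype.sum_sum_type]
      have h1 : ∀ i : Fin n, (if σ (Sum.inl i) ≠ none then 1 else 0) = 1 := by
        intro i; simp [hσdef]
      have h2 : ∀ j : Fin n, (if σ (Sum.inr j) ≠ none then 1 else 0)
          = (if j ∉ S then 1 else 0) := by
        intro j
        by_cases hj : j ∈ S <;> simp [hσdef, hj]
      simp only [h1, h2, Finset.sum_const, Finset.card_univ, Fintype.card_fin, smul_eq_mul,
        mul_one, Finset.sum_ite_eq, ← Finset.card_filter]
    have hcompl : (Finset.univ.filter (fun j : Fin n => j ∉ S)).card = n - k := by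
      rw [Finset.filter_not, Finset.card_sdiff_of_subset (Finset.filter_subset _ _)]
      simp [Finset.filter_mem_eq_inter, hScard]
    omega
end

section
/- Every feasible solution of the reduced EVSP instance serves at most 2n − opt_BPP customers. -/
open Finset

/-- Every feasible solution of the reduced EVSP instance serves at most
`2 * n - optBPP` customers. -/
theorem stmt_3 (n : ℕ) (hn : 1 ≤ n) (ℓ : Fin n → ℝ)
    (hℓ : ∀ i : Fin n, 0 < ℓ i ∧ ℓ i ≤ 1)
    (σ : Fin n ⊕ Fin n → Option (Fin n)) (hσ : Feasible n ℓ σ) :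
    servedCount n σ ≤ 2 * n - optBPP n ℓ := by
  classical
  obtain ⟨h1, h2⟩ := hσ
  set U : Finset (Fin n) := univ.filter (fun i => σ (Sum.inl i) = none) with hU
  set IV := itemVehicles n σ with hIV
  set B : Fin n → Finset (Fin n) :=
    fun v => univ.filter (fun i => σ (Sum.inl i) = some v) with hB
  set P : Finset (Finset (Fin n)) := IV.image B ∪ U.image (fun i => {i}) with hP
  have hpack : IsBinPacking n ℓ P := by
    refine ⟨?_, ?_, ?_⟩
    · intro p hp
      simp only [hP, mem_union, mem_image] at hp
      rcases hp with ⟨v, hv, rfl⟩ | ⟨i, _, rfl⟩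
      · simp only [hIV, itemVehicles, mem_filter] at hv
        obtain ⟨i, hi⟩ := hv.2
        exact ⟨i, by simp [hB, hi]⟩
      · exact ⟨i, mem_singleton_self i⟩
    · intro p hp
      simp only [hP, mem_union, mem_image] at hp
      rcases hp with ⟨v, _, rfl⟩ | ⟨i, _, rfl⟩
      · exact h1 v
      · simpa using (hℓ i).2
    · intro i
      by_cases hi : σ (Sum.inl i) = none
      · refine ⟨{i}, ⟨?_, mem_singleton_self i⟩, ?_⟩
        · exact mem_union_right _ (mem_image_of_mem _ (by simp [hU, hi]))
        · rintro p ⟨hp, hip⟩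
          simp only [hP, mem_union, mem_image] at hp
          rcases hp with ⟨v, _, rfl⟩ | ⟨i', _, rfl⟩
          · simp only [hB, mem_filter] at hip
            rw [hip.2] at hi; exact absurd hi (by simp)
          · simp only [mem_singleton] at hip; subst hip; rfl
      · obtain ⟨v, hv⟩ := Option.ne_none_iff_exists'.mp hi
        refine ⟨B v, ⟨?_, by simp [hB, hv]⟩, ?_⟩
        · refine mem_union_left _ (mem_image_of_mem _ ?_)
          simp only [hIV, itemVehicles, mem_filter]
          exact ⟨mem_univ _, ⟨i, hv⟩⟩
        · rintro p ⟨hp, hip⟩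
          simp only [hP, mem_union, mem_image] at hp
          rcases hp with ⟨v', _, rfl⟩ | ⟨i', hi', rfl⟩
          · simp only [hB, mem_filter] at hip
            rw [hip.2] at hv
            rw [Option.some_inj.mp hv]
          · simp only [mem_singleton] at hip; subst hip
            simp only [hU, mem_filter] at hi'
            exact absurd hi'.2 hi
  have hopt : optBPP n ℓ ≤ IV.card + U.card := by
    have h1' : optBPP n ℓ ≤ P.card := Nat.sInf_le ⟨P, hpack, rfl⟩
    have h2' : P.card ≤ IV.card + U.card := by
      rw [hP]
      exact le_trans (card_union_le _ _) (Nat.add_le_add card_image_le card_image_le)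
    omega
  -- dummy served vehicles
  set DS : Finset (Fin n) := univ.filter (fun j => σ (Sum.inr j) ≠ none) with hDS
  have hdum : DS.card + IV.card ≤ n := by
    have hmap : ∀ j ∈ DS, ∀ v, σ (Sum.inr j) = some v → v ∈ univ \ IV := by
      intro j _ v hv
      simp only [mem_sdiff, mem_univ, true_and]
      simp only [hIV, itemVehicles, mem_filter, mem_univ, true_and, not_exists]
      intro i
      exact h2 v j hv (Sum.inl i) (by simp)
    have hcard : DS.card ≤ (univ \ IV).card := by
      refine card_le_card_of_injOn
        (fun j => (σ (Sum.inr j)).getD ⟨0, hn⟩) ?_ ?_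
      · intro j hj
        have hj' : j ∈ DS := by simpa [hDS] using hj
        obtain ⟨v, hv⟩ := Option.ne_none_iff_exists'.mp (mem_filter.mp hj').2
        simp only [hv, Option.getD_some]
        exact hmap j hj' v hv
      · intro j1 hj1 j2 hj2 heq
        have hj1' : σ (Sum.inr j1) ≠ none := by
          have : j1 ∈ DS := by simpa [hDS] using hj1
          exact (mem_filter.mp this).2
        have hj2' : σ (Sum.inr j2) ≠ none := by
          have : j2 ∈ DS := by simpa [hDS] using hj2
          exact (mem_filter.mp this).2
        obtain ⟨v1, hv1⟩ := Option.ne_none_iff_exists'.mp hj1'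
        obtain ⟨v2, hv2⟩ := Option.ne_none_iff_exists'.mp hj2'
        simp only [hv1, hv2, Option.getD_some] at heq
        subst heq
        by_contra hne
        exact h2 v1 j1 hv1 (Sum.inr j2) (by simpa using (Ne.symm hne)) hv2
    have : (univ \ IV).card = n - IV.card := by
      rw [card_sdiff_of_subset (subset_univ _)]
      simp
    have hle : IV.card ≤ n := by
      simpa using card_le_univ IV
    omega
  -- items served
  set IS : Finset (Fin n) := univ.filter (fun i => σ (Sum.inl i) ≠ none) with hIS
  have hitem : IS.card + U.card = n := by
    have key := card_filter_add_card_filter_not (s := (univ : Finset (Fin n)))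
      (p := fun i => σ (Sum.inl i) ≠ none)
    have e1 : (univ.filter (fun a : Fin n => σ (Sum.inl a) ≠ none)) = IS := rfl
    have e2 : (univ.filter (fun a : Fin n => ¬ σ (Sum.inl a) ≠ none)) = U := by
      ext a; simp [hU]
    rw [e1, e2, card_univ, Fintype.card_fin] at key
    exact key
  -- split servedCount
  have hsplit : servedCount n σ = IS.card + DS.card := by
    unfold servedCount
    rw [← card_toLeft_add_card_toRight]
    congr 1
    · congr 1
      ext i
      simp [Finset.mem_toLeft, hIS]
    · congr 1
      ext j
      simp [Finset.mem_toRight, hDS]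
  have hfin : servedCount n σ + optBPP n ℓ ≤ 2 * n := by
    calc servedCount n σ + optBPP n ℓ
        ≤ IS.card + DS.card + (IV.card + U.card) := by omega
      _ = (IS.card + U.card) + (DS.card + IV.card) := by ring
      _ ≤ n + n := by omega
      _ = 2 * n := by ring
  omega
end

section
/- If σ is a feasible solution of the reduced EVSP instance whose number of served customers is maximum among all feasible solutions, then every vehicle serves at least one customer; that is, for every v : Fin n there exists a customer c with σ c = some v. -/
open Finset

/-- In a feasible solution maximizing the number of served customers, every vehicle serves at
least one customer. -/
theorem stmt_4 (n : ℕ) (hn : 1 ≤ n) (ℓ : Fin n → ℝ)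
    (hℓ : ∀ i : Fin n, 0 < ℓ i ∧ ℓ i ≤ 1)
    (σ : Fin n ⊕ Fin n → Option (Fin n)) (hσ : Feasible n ℓ σ)
    (hmax : ∀ τ : Fin n ⊕ Fin n → Option (Fin n), Feasible n ℓ τ →
      servedCount n τ ≤ servedCount n σ) :
    ∀ v : Fin n, ∃ c : Fin n ⊕ Fin n, σ c = some v := by
  intro v
  by_contra hv
  push_neg at hv
  -- There must be an unserved customer.
  have hnone : ∃ c, σ c = none := by
    by_contra hall
    push_neg at hall
    have hex : ∀ j : Fin n, ∃ w, σ (Sum.inr j) = some w := fun j =>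
      Option.ne_none_iff_exists'.mp (hall _)
    choose f hf using hex
    have hinj : Function.Injective f := by
      intro a b hab
      by_contra hne
      exact hσ.2 (f a) a (hf a) (Sum.inr b)
        (by simp [Ne, Sum.inr.injEq]; exact fun h => hne (h ▸ rfl)) (hab ▸ hf b)
    obtain ⟨j, hj⟩ := Finite.injective_iff_surjective.mp hinj v
    exact hv (Sum.inr j) (hj ▸ hf j)
  obtain ⟨c0, hc0⟩ := hnone
  set τ : Fin n ⊕ Fin n → Option (Fin n) := Function.update σ c0 (some v) with hτ
  have hτc0 : τ c0 = some v := by simp [hτ]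
  have hτne : ∀ c, c ≠ c0 → τ c = σ c := fun c hc => Function.update_of_ne hc _ _
  have hfeas : Feasible n ℓ τ := by
    constructor
    · intro w
      rcases c0 with i0 | j0
      · by_cases hw : w = v
        · subst hw
          have : Finset.univ.filter (fun i : Fin n => τ (Sum.inl i) = some w) = {i0} := by
            ext i
            simp only [Finset.mem_filter, Finset.mem_univ, true_and, Finset.mem_singleton]
            constructor
            · intro hi
              by_contra hne
              have : τ (Sum.inl i) = σ (Sum.inl i) := hτne _ (by simp [hne])
              exact hv (Sum.inl i) (this ▸ hi)
            · rintro rfl; exact hτc0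
          rw [this, Finset.sum_singleton]
          exact (hℓ i0).2
        · have : Finset.univ.filter (fun i : Fin n => τ (Sum.inl i) = some w) =
              Finset.univ.filter (fun i : Fin n => σ (Sum.inl i) = some w) := by
            ext i
            simp only [Finset.mem_filter, Finset.mem_univ, true_and]
            by_cases hi : (Sum.inl i : Fin n ⊕ Fin n) = Sum.inl i0
            · rw [hi, hτc0, hc0]
              constructor
              · intro h; exact absurd (Option.some.inj h).symm hw
              · intro h; exact absurd h (by simp)
            · rw [hτne _ hi]
          rw [this]; exact hσ.1 w
      · have : Finset.univ.filter (fun i : Fin n => τ (Sum.inl i) = some w) =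
            Finset.univ.filter (fun i : Fin n => σ (Sum.inl i) = some w) := by
          ext i
          simp only [Finset.mem_filter, Finset.mem_univ, true_and]
          rw [hτne _ (by simp)]
        rw [this]; exact hσ.1 w
    · intro w j hwj c hc
      by_cases hjc0 : (Sum.inr j : Fin n ⊕ Fin n) = c0
      · -- c0 is the dummy j, so w = v
        have hwv : w = v := by
          rw [hjc0, hτc0] at hwj
          exact (Option.some.inj hwj).symm
        subst hwv
        intro habs
        by_cases hcc0 : c = c0
        · exact hc (hcc0.trans hjc0.symm)
        · exact hv c ((hτne c hcc0) ▸ habs)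
      · have hwj' : σ (Sum.inr j) = some w := (hτne _ hjc0) ▸ hwj
        have hwv : w ≠ v := fun h => hv _ (h ▸ hwj')
        intro habs
        by_cases hcc0 : c = c0
        · rw [hcc0, hτc0] at habs
          exact hwv (Option.some.inj habs).symm
        · exact hσ.2 w j hwj' c hc ((hτne c hcc0) ▸ habs)
  have hlt : servedCount n σ < servedCount n τ := by
    unfold servedCount
    apply Finset.card_lt_card
    constructor
    · intro c hc
      simp only [Finset.mem_filter, Finset.mem_univ, true_and] at hc ⊢
      by_cases hcc0 : c = c0
      · rw [hcc0, hc0] at hc; exact absurd rfl hc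
      · rw [hτne c hcc0]; exact hc
    · intro hsub
      have := hsub (Finset.mem_filter.mpr ⟨Finset.mem_univ c0, by rw [hτc0]; simp⟩)
      simp only [Finset.mem_filter, hc0] at this
      exact this.2 rfl
  exact absurd (hmax τ hfeas) (Nat.not_le.mpr hlt)
end

section
/- Let σ be a feasible solution of the reduced EVSP instance that maximizes the number of served customers and that, among all such maximizers, minimizes the number of served dummy customers. If at least one dummy customer is served by σ, then every item customer is served by σ. -/
open Finset

/-!
If dummy customer `j` is served by vehicle `v` while item customer `i` is unserved, drop `j` and
let `v` serve `i` instead. A dummy occupies its vehicle alone and `ℓ i ≤ 1`, so the exchanged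
solution is feasible; it serves as many customers as `σ` but fewer dummies, contradicting the
choice of `σ`.
-/

open Function

section Counting

variable {α β : Type*} [Fintype α] [DecidableEq α]

lemma card_filter_update_update_ne_none (f : α → Option β) {a b : α} (ha : f a ≠ none)
    (hb : f b = none) (v : β) :
    #{c | update (update f a none) b (some v) c ≠ none} = #{c | f c ≠ none} := by
  have hab : a ≠ b := by rintro rfl; exact ha hb
  refine card_nbij' (Equiv.swap a b) (Equiv.swap a b) ?_ ?_
    (fun _ _ ↦ by simp) (fun _ _ ↦ by simp)
  all_goals
    intro c hc
    simp only [coe_filter, mem_univ, true_and] at hc ⊢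
    rcases eq_or_ne c a with rfl | hca
    · simp_all
    rcases eq_or_ne c b with rfl | hcb
    · simp_all
    simp_all [Equiv.swap_apply_of_ne_of_ne]

lemma card_filter_update_ne_none_lt (f : α → Option β) {a : α} (ha : f a ≠ none) :
    #{c | update f a none c ≠ none} < #{c | f c ≠ none} := by
  have herase : ({c | update f a none c ≠ none} : Finset α) =
      ({c | f c ≠ none} : Finset α).erase a := by
    ext c
    rcases eq_or_ne c a with rfl | hca <;> simp_all
  rw [herase]
  exact card_erase_lt_of_mem (by simpa using ha)

end Counting

variable {n : ℕ} {ℓ : Fin n → ℝ} {σ : Fin n ⊕ Fin n → Option (Fin n)}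

def exchange (σ : Fin n ⊕ Fin n → Option (Fin n)) (i j v : Fin n) :
    Fin n ⊕ Fin n → Option (Fin n) :=
  update (update σ (.inr j) none) (.inl i) (some v)

lemma exchange_apply_of_ne {i j v : Fin n} {c : Fin n ⊕ Fin n} (hcj : c ≠ .inr j)
    (hci : c ≠ .inl i) : exchange σ i j v c = σ c := by
  simp [exchange, hcj, hci]

@[simp] lemma exchange_inl_self (i j v : Fin n) : exchange σ i j v (.inl i) = some v := by
  simp [exchange]

@[simp] lemma exchange_inr_self (i j v : Fin n) : exchange σ i j v (.inr j) = none := by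
  simp [exchange]

lemma feasible_exchange (hσ : Feasible n ℓ σ) {i j v : Fin n} (hj : σ (.inr j) = some v)
    (hi : σ (.inl i) = none) (hℓi : ℓ i ≤ 1) : Feasible n ℓ (exchange σ i j v) := by
  have hitem_ne : ∀ k, k ≠ i → exchange σ i j v (.inl k) = σ (.inl k) := fun k hk ↦
    exchange_apply_of_ne Sum.inl_ne_inr (by simpa using hk)
  constructor
  · intro w
    rcases eq_or_ne w v with rfl | hwv
    · have hitems : univ.filter (fun k ↦ exchange σ i j w (.inl k) = some w) = {i} := by
        ext k
        rcases eq_or_ne k i with rfl | hki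
        · simp
        · simpa [hitem_ne k hki, hki] using hσ.2 w j hj (.inl k) Sum.inl_ne_inr
      simpa [hitems] using hℓi
    · have hitems : univ.filter (fun k ↦ exchange σ i j v (.inl k) = some w) =
          univ.filter (fun k ↦ σ (.inl k) = some w) := by
        ext k
        rcases eq_or_ne k i with rfl | hki
        · simp [hi, hwv.symm]
        · simp [hitem_ne k hki]
      rw [hitems]
      exact hσ.1 w
  · intro w k hk c hc
    have hkj : k ≠ j := by rintro rfl; simp at hk
    rw [exchange_apply_of_ne (by simpa using hkj) Sum.inr_ne_inl] at hk
    have hwv : w ≠ v := by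
      rintro rfl; exact hσ.2 w j hj (.inr k) (by simpa using hkj) hk
    by_cases hcj : c = .inr j
    · simp [hcj]
    by_cases hci : c = .inl i
    · simp [hci, hwv.symm]
    rw [exchange_apply_of_ne hcj hci]
    exact hσ.2 w k hk c hc

lemma servedCount_exchange {i j v : Fin n} (hj : σ (.inr j) ≠ none) (hi : σ (.inl i) = none) :
    servedCount n (exchange σ i j v) = servedCount n σ :=
  card_filter_update_update_ne_none σ hj hi v

lemma dummyServed_exchange_lt {i j v : Fin n} (hj : σ (.inr j) ≠ none) :
    dummyServed n (exchange σ i j v) < dummyServed n σ := by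
  have hdummies : ∀ k, exchange σ i j v (.inr k) = update (fun k ↦ σ (.inr k)) j none k := by
    intro k
    rcases eq_or_ne k j with rfl | hkj
    · simp
    · have hk : (.inr k : Fin n ⊕ Fin n) ≠ .inr j := by simpa using hkj
      simp [exchange_apply_of_ne hk Sum.inr_ne_inl, hkj]
  simp only [dummyServed, hdummies]
  exact card_filter_update_ne_none_lt (fun k ↦ σ (.inr k)) hj

theorem stmt_5_general (n : ℕ) (ℓ : Fin n → ℝ)
    (hℓ : ∀ i : Fin n, 0 < ℓ i ∧ ℓ i ≤ 1)
    (σ : Fin n ⊕ Fin n → Option (Fin n)) (hσ : Feasible n ℓ σ)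
    (hmax : ∀ τ : Fin n ⊕ Fin n → Option (Fin n), Feasible n ℓ τ →
      servedCount n τ ≤ servedCount n σ)
    (hmin : ∀ τ : Fin n ⊕ Fin n → Option (Fin n), Feasible n ℓ τ →
      (∀ ρ : Fin n ⊕ Fin n → Option (Fin n), Feasible n ℓ ρ →
        servedCount n ρ ≤ servedCount n τ) →
      dummyServed n σ ≤ dummyServed n τ)
    (hdummy : ∃ j : Fin n, σ (Sum.inr j) ≠ none) :
    ∀ i : Fin n, σ (Sum.inl i) ≠ none := by
  intro i hi
  obtain ⟨j, hj⟩ := hdummy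
  obtain ⟨v, hv⟩ := Option.ne_none_iff_exists'.mp hj
  have hτmax : ∀ ρ, Feasible n ℓ ρ → servedCount n ρ ≤ servedCount n (exchange σ i j v) := by
    simpa only [servedCount_exchange hj hi] using hmax
  have hτmin := hmin _ (feasible_exchange hσ hv hi (hℓ i).2) hτmax
  exact hτmin.not_gt (dummyServed_exchange_lt hj)

/-- Let `σ` be a feasible solution maximizing the number of served customers and, among all such
maximizers, minimizing the number of served dummy customers.  If at least one dummy customer is
served, then every item customer is served. -/
theorem stmt_5 (n : ℕ) (hn : 1 ≤ n) (ℓ : Fin n → ℝ)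
    (hℓ : ∀ i : Fin n, 0 < ℓ i ∧ ℓ i ≤ 1)
    (σ : Fin n ⊕ Fin n → Option (Fin n)) (hσ : Feasible n ℓ σ)
    (hmax : ∀ τ : Fin n ⊕ Fin n → Option (Fin n), Feasible n ℓ τ →
      servedCount n τ ≤ servedCount n σ)
    (hmin : ∀ τ : Fin n ⊕ Fin n → Option (Fin n), Feasible n ℓ τ →
      (∀ ρ : Fin n ⊕ Fin n → Option (Fin n), Feasible n ℓ ρ →
        servedCount n ρ ≤ servedCount n τ) →
      dummyServed n σ ≤ dummyServed n τ)
    (hdummy : ∃ j : Fin n, σ (Sum.inr j) ≠ none) :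
    ∀ i : Fin n, σ (Sum.inl i) ≠ none :=
  stmt_5_general n ℓ hℓ σ hσ hmax hmin hdummy
end

section
/- If σ is a feasible solution of the reduced EVSP instance in which every item customer is served, then the collection of nonempty fibers {i : Fin n | σ (inl i) = some v}, as v ranges over the vehicles, is a bin packing of the items; in particular, opt_BPP is at most the number of vehicles that serve at least one item customer under σ. -/
open Finset

/-- If `σ` is a feasible solution serving every item customer, then the collection of nonempty
fibers `{i | σ (Sum.inl i) = some v}`, as `v` ranges over the vehicles, is a bin packing of the
items; in particular, `optBPP` is at most the number of vehicles serving at least one item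
customer. -/
theorem stmt_6 (n : ℕ) (hn : 1 ≤ n) (ℓ : Fin n → ℝ)
    (hℓ : ∀ i : Fin n, 0 < ℓ i ∧ ℓ i ≤ 1)
    (σ : Fin n ⊕ Fin n → Option (Fin n)) (hσ : Feasible n ℓ σ)
    (hall : ∀ i : Fin n, σ (Sum.inl i) ≠ none) :
    IsBinPacking n ℓ
      ((itemVehicles n σ).image
        (fun v : Fin n => Finset.univ.filter (fun i : Fin n => σ (Sum.inl i) = some v))) ∧
    optBPP n ℓ ≤ (itemVehicles n σ).card := by

  have hpack : IsBinPacking n ℓ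
      ((itemVehicles n σ).image
        (fun v : Fin n => Finset.univ.filter (fun i : Fin n => σ (Sum.inl i) = some v))) := by
    refine ⟨?_, ?_, ?_⟩
    · intro p hp
      obtain ⟨v, hv, rfl⟩ := Finset.mem_image.mp hp
      simp only [itemVehicles, Finset.mem_filter] at hv
      obtain ⟨i, hi⟩ := hv.2
      exact ⟨i, Finset.mem_filter.mpr ⟨Finset.mem_univ _, hi⟩⟩
    · intro p hp
      obtain ⟨v, hv, rfl⟩ := Finset.mem_image.mp hp
      exact hσ.1 v
    · intro i
      obtain ⟨v, hv⟩ := Option.ne_none_iff_exists'.mp (hall i)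
      refine ⟨Finset.univ.filter (fun j : Fin n => σ (Sum.inl j) = some v), ⟨?_, ?_⟩, ?_⟩
      · exact Finset.mem_image.mpr ⟨v, by simp [itemVehicles]; exact ⟨i, hv⟩, rfl⟩
      · simpa using hv
      · rintro p ⟨hp, hip⟩
        obtain ⟨w, hw, rfl⟩ := Finset.mem_image.mp hp
        simp only [Finset.mem_filter] at hip
        have : w = v := by
          have := hip.2
          rw [hv] at this
          exact (Option.some_inj.mp this).symm ▸ rfl
        subst this; rfl
  refine ⟨hpack, ?_⟩
  calc optBPP n ℓ ≤ ((itemVehicles n σ).image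
        (fun v : Fin n => Finset.univ.filter (fun i : Fin n => σ (Sum.inl i) = some v))).card :=
        Nat.sInf_le ⟨_, hpack, rfl⟩
    _ ≤ (itemVehicles n σ).card := Finset.card_image_le
end

section
/- Let σ be a feasible solution of the reduced EVSP instance whose number of served customers is maximum among all feasible solutions. Then the number of vehicles that serve at least one item customer under σ, plus the number of item customers left unserved by σ, equals opt_BPP; consequently, forming one bin from the item customers served by each item-serving vehicle and one singleton bin from each unserved item yields an optimal bin packing of the items. -/
/-!
A packing into `k` bins gives a feasible solution serving all `n` items on `k` vehicles and one
dummy on each of the other `n - k` vehicles, i.e. `2n - k` customers. Conversely, a served dummy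
occupies a vehicle alone, so a solution whose items use `m` vehicles and leave `u` items unserved
serves at most `(n - u) + (n - m)` customers, while its vehicle loads together with singletons
for the unserved items form a packing into `m + u` bins. For a maximum solution these two facts
squeeze `m + u` to `opt_BPP`.
-/

open Finset

theorem servedCount_eq {n : ℕ} (σ : Fin n ⊕ Fin n → Option (Fin n)) :
    servedCount n σ = (univ.filter fun i => σ (Sum.inl i) ≠ none).card + dummyServed n σ := by
  simp only [servedCount, dummyServed, card_filter, Fintype.sum_sum_type]

namespace IsBinPacking

variable {n : ℕ} {ℓ : Fin n → ℝ} {P : Finset (Finset (Fin n))}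

noncomputable def bin (hP : IsBinPacking n ℓ P) (i : Fin n) : Finset (Fin n) :=
  (hP.2.2 i).exists.choose

theorem bin_mem (hP : IsBinPacking n ℓ P) (i : Fin n) : hP.bin i ∈ P :=
  (hP.2.2 i).exists.choose_spec.1

theorem mem_bin (hP : IsBinPacking n ℓ P) (i : Fin n) : i ∈ hP.bin i :=
  (hP.2.2 i).exists.choose_spec.2

theorem bin_eq_of_mem (hP : IsBinPacking n ℓ P) {p : Finset (Fin n)} (hp : p ∈ P) {i : Fin n}
    (hi : i ∈ p) : hP.bin i = p :=
  (hP.2.2 i).unique ⟨hP.bin_mem i, hP.mem_bin i⟩ ⟨hp, hi⟩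

theorem card_le (hP : IsBinPacking n ℓ P) : P.card ≤ n := by
  simpa using card_le_card_of_surjOn hP.bin (s := univ) fun p hp => by
    obtain ⟨i, hi⟩ := hP.1 p hp
    exact ⟨i, mem_univ i, hP.bin_eq_of_mem hp hi⟩

theorem optBPP_le (hP : IsBinPacking n ℓ P) : optBPP n ℓ ≤ P.card :=
  Nat.sInf_le ⟨P, hP, rfl⟩

theorem exists_card_eq_optBPP (hP : IsBinPacking n ℓ P) :
    ∃ Q, IsBinPacking n ℓ Q ∧ Q.card = optBPP n ℓ :=
  Nat.sInf_mem (s := {k | ∃ Q, IsBinPacking n ℓ Q ∧ Q.card = k}) ⟨P.card, P, hP, rfl⟩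

noncomputable def toSolution (hP : IsBinPacking n ℓ P) (g : {p // p ∈ P} ↪ Fin n) :
    Fin n ⊕ Fin n → Option (Fin n) :=
  Sum.elim (fun i => some (g ⟨hP.bin i, hP.bin_mem i⟩))
    fun j => if j ∈ univ.map g then none else some j

section toSolution

variable (hP : IsBinPacking n ℓ P) (g : {p // p ∈ P} ↪ Fin n)

theorem toSolution_inl_eq_some_iff {p : Finset (Fin n)} (hp : p ∈ P) (i : Fin n) :
    hP.toSolution g (Sum.inl i) = some (g ⟨p, hp⟩) ↔ i ∈ p := by
  rw [toSolution, Sum.elim_inl, Option.some_inj, g.injective.eq_iff, Subtype.mk.injEq]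
  exact ⟨fun h => h ▸ hP.mem_bin i, hP.bin_eq_of_mem hp⟩

theorem toSolution_inl_ne_of_notMem {v : Fin n} (hv : v ∉ univ.map g) (i : Fin n) :
    hP.toSolution g (Sum.inl i) ≠ some v := by
  rw [toSolution, Sum.elim_inl, Ne, Option.some_inj]
  exact fun h => hv (h ▸ mem_map_of_mem g (mem_univ _))

theorem toSolution_inr_eq_some_iff {j v : Fin n} :
    hP.toSolution g (Sum.inr j) = some v ↔ j = v ∧ j ∉ univ.map g := by
  rw [toSolution, Sum.elim_inr]
  split_ifs with h
  · simp only [false_iff, not_and, not_not]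
    exact fun _ => h
  · simp only [Option.some_inj, h, not_false_eq_true, and_true]

theorem feasible_toSolution : Feasible n ℓ (hP.toSolution g) := by
  refine ⟨fun v => ?_, fun v j hj c hc => ?_⟩
  · by_cases hv : v ∈ univ.map g
    · obtain ⟨⟨p, hp⟩, -, rfl⟩ := mem_map.1 hv
      have hload : univ.filter (fun i => hP.toSolution g (Sum.inl i) = some (g ⟨p, hp⟩)) = p := by
        ext i
        simp [toSolution_inl_eq_some_iff hP g hp]
      rw [hload]
      exact hP.2.1 p hp
    · simp [toSolution_inl_ne_of_notMem hP g hv]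
  · obtain ⟨rfl, hfree⟩ := (toSolution_inr_eq_some_iff hP g).1 hj
    rcases c with i | j'
    · exact toSolution_inl_ne_of_notMem hP g hfree i
    · rw [Ne, toSolution_inr_eq_some_iff]
      exact fun h => hc (congrArg Sum.inr h.1)

theorem servedCount_toSolution_add_card : servedCount n (hP.toSolution g) + P.card = 2 * n := by
  have hitems : (univ.filter fun i => hP.toSolution g (Sum.inl i) ≠ none) = univ := by
    ext i
    simp [toSolution]
  have hdummies : dummyServed n (hP.toSolution g) = (univ \ univ.map g).card := by
    rw [dummyServed, sdiff_eq_filter]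
    congr 1
    ext j
    simp [toSolution]
  rw [servedCount_eq, hitems, hdummies, card_sdiff_of_subset (subset_univ _), card_map]
  simp only [card_univ, Fintype.card_fin, Fintype.card_coe]
  have := hP.card_le
  omega

end toSolution

theorem exists_feasible_servedCount_add_card_eq (hP : IsBinPacking n ℓ P) :
    ∃ τ, Feasible n ℓ τ ∧ servedCount n τ + P.card = 2 * n := by
  obtain ⟨g⟩ : Nonempty ({p // p ∈ P} ↪ Fin n) :=
    Function.Embedding.nonempty_of_card_le (by simpa using hP.card_le)
  exact ⟨hP.toSolution g, hP.feasible_toSolution g, hP.servedCount_toSolution_add_card g⟩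

end IsBinPacking

section Solution

variable {n : ℕ} (σ : Fin n ⊕ Fin n → Option (Fin n))

theorem mem_itemVehicles {v : Fin n} : v ∈ itemVehicles n σ ↔ ∃ i, σ (Sum.inl i) = some v := by
  simp [itemVehicles]

def itemsOf (v : Fin n) : Finset (Fin n) :=
  univ.filter fun i => σ (Sum.inl i) = some v

def unservedItems : Finset (Fin n) :=
  univ.filter fun i => σ (Sum.inl i) = none

def solutionBins : Finset (Finset (Fin n)) :=
  (itemVehicles n σ).image (itemsOf σ) ∪ (unservedItems σ).image fun i => {i}

@[simp]
theorem mem_itemsOf {v i : Fin n} : i ∈ itemsOf σ v ↔ σ (Sum.inl i) = some v := by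
  simp [itemsOf]

@[simp]
theorem mem_unservedItems {i : Fin n} : i ∈ unservedItems σ ↔ σ (Sum.inl i) = none := by
  simp [unservedItems]

theorem card_solutionBins :
    (solutionBins σ).card = (itemVehicles n σ).card + (unservedItems σ).card := by
  rw [solutionBins, card_union_of_disjoint, card_image_of_injOn,
    card_image_of_injective _ singleton_injective]
  · rintro v hv w - hvw
    obtain ⟨i, hi⟩ := (mem_itemVehicles σ).1 hv
    have hiw : i ∈ itemsOf σ w := hvw ▸ (mem_itemsOf σ).2 hi
    exact Option.some_injective _ (hi.symm.trans ((mem_itemsOf σ).1 hiw))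
  · simp only [disjoint_left, mem_image]
    rintro _ ⟨v, -, rfl⟩ ⟨i, hi, hiv⟩
    have hiv : i ∈ itemsOf σ v := hiv ▸ mem_singleton_self i
    simp_all

theorem existsUnique_mem_solutionBins (i : Fin n) : ∃! p, p ∈ solutionBins σ ∧ i ∈ p := by
  simp only [solutionBins, mem_union, mem_image]
  cases h : σ (Sum.inl i) with
  | none =>
    refine ⟨{i}, ⟨Or.inr ⟨i, (mem_unservedItems σ).2 h, rfl⟩, mem_singleton_self i⟩, ?_⟩
    rintro _ ⟨⟨v, -, rfl⟩ | ⟨j, -, rfl⟩, hi⟩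
    · simp_all
    · rw [mem_singleton.1 hi]
  | some v =>
    refine ⟨itemsOf σ v,
      ⟨Or.inl ⟨v, (mem_itemVehicles σ).2 ⟨i, h⟩, rfl⟩, (mem_itemsOf σ).2 h⟩, ?_⟩
    rintro _ ⟨⟨w, -, rfl⟩ | ⟨j, hj, rfl⟩, hi⟩
    · simp_all
    · rw [mem_singleton.1 hi] at h
      simp_all

variable {σ} {ℓ : Fin n → ℝ}

namespace Feasible

theorem isBinPacking_solutionBins (hℓ : ∀ i, ℓ i ≤ 1) (hσ : Feasible n ℓ σ) :
    IsBinPacking n ℓ (solutionBins σ) := by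
  refine ⟨?_, ?_, existsUnique_mem_solutionBins σ⟩ <;>
    simp only [solutionBins, mem_union, mem_image] <;>
    rintro _ (⟨v, hv, rfl⟩ | ⟨i, -, rfl⟩)
  · obtain ⟨i, hi⟩ := (mem_itemVehicles σ).1 hv
    exact ⟨i, (mem_itemsOf σ).2 hi⟩
  · exact singleton_nonempty i
  · exact hσ.1 v
  · simpa using hℓ i

theorem dummyServed_add_card_itemVehicles_le_s7 (hσ : Feasible n ℓ σ) :
    dummyServed n σ + (itemVehicles n σ).card ≤ n := by
  -- Each served dummy occupies a vehicle of its own, which serves no item.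
  let vehicle (j : Fin n) : Fin n := (σ (Sum.inr j)).getD j
  have hvehicle : ∀ j, σ (Sum.inr j) ≠ none → σ (Sum.inr j) = some (vehicle j) := by
    intro j hj
    obtain ⟨v, hv⟩ := Option.ne_none_iff_exists'.1 hj
    simp [vehicle, hv]
  have hle : dummyServed n σ ≤ (univ \ itemVehicles n σ).card := by
    refine card_le_card_of_injOn vehicle (fun j hj => ?_) (fun j hj j' hj' hjj' => ?_)
    · rw [mem_coe, mem_sdiff, mem_itemVehicles]
      refine ⟨mem_univ _, fun ⟨i, hi⟩ => ?_⟩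
      exact hσ.2 _ j (hvehicle j (mem_filter.1 hj).2) (Sum.inl i) Sum.inl_ne_inr hi
    · by_contra hne
      exact hσ.2 _ j (hvehicle j (mem_filter.1 hj).2) (Sum.inr j')
        (by simpa [eq_comm] using hne) (hjj' ▸ hvehicle j' (mem_filter.1 hj').2)
  rw [card_sdiff_of_subset (subset_univ _), card_univ, Fintype.card_fin] at hle
  have := card_le_univ (itemVehicles n σ)
  simp only [Fintype.card_fin] at this
  omega

theorem servedCount_add_card_solutionBins_le (hσ : Feasible n ℓ σ) :
    servedCount n σ + (solutionBins σ).card ≤ 2 * n := by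
  have hitems : (univ.filter fun i => σ (Sum.inl i) ≠ none).card + (unservedItems σ).card = n := by
    rw [add_comm, unservedItems, card_filter_add_card_filter_not, card_univ, Fintype.card_fin]
  rw [servedCount_eq, card_solutionBins]
  have := hσ.dummyServed_add_card_itemVehicles_le_s7
  omega

end Feasible

end Solution

theorem stmt_7_general (n : ℕ) (ℓ : Fin n → ℝ)
    (hℓ : ∀ i : Fin n, 0 < ℓ i ∧ ℓ i ≤ 1)
    (σ : Fin n ⊕ Fin n → Option (Fin n)) (hσ : Feasible n ℓ σ)
    (hmax : ∀ τ : Fin n ⊕ Fin n → Option (Fin n), Feasible n ℓ τ →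
      servedCount n τ ≤ servedCount n σ) :
    (itemVehicles n σ).card
        + (Finset.univ.filter (fun i : Fin n => σ (Sum.inl i) = none)).card
      = optBPP n ℓ ∧
    IsBinPacking n ℓ
      ((itemVehicles n σ).image
          (fun v : Fin n => Finset.univ.filter (fun i : Fin n => σ (Sum.inl i) = some v)) ∪
        (Finset.univ.filter (fun i : Fin n => σ (Sum.inl i) = none)).image
          (fun i : Fin n => {i})) ∧
    ((itemVehicles n σ).image
          (fun v : Fin n => Finset.univ.filter (fun i : Fin n => σ (Sum.inl i) = some v)) ∪
        (Finset.univ.filter (fun i : Fin n => σ (Sum.inl i) = none)).image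
          (fun i : Fin n => {i})).card = optBPP n ℓ := by
  have hpack : IsBinPacking n ℓ (solutionBins σ) :=
    hσ.isBinPacking_solutionBins fun i => (hℓ i).2
  obtain ⟨P, hP, hPopt⟩ := hpack.exists_card_eq_optBPP
  obtain ⟨τ, hτ, hτserved⟩ := hP.exists_feasible_servedCount_add_card_eq
  have hopt : (solutionBins σ).card = optBPP n ℓ := by
    refine le_antisymm ?_ hpack.optBPP_le
    have := hmax τ hτ
    have := hσ.servedCount_add_card_solutionBins_le
    omega
  exact ⟨(card_solutionBins σ).symm.trans hopt, hpack, hopt⟩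

/-- Let `σ` be a feasible solution maximizing the number of served customers.  Then the number of
vehicles serving at least one item customer, plus the number of unserved item customers, equals
`optBPP`; consequently, forming one bin from the item customers served by each item-serving
vehicle and one singleton bin from each unserved item yields an optimal bin packing. -/
theorem stmt_7 (n : ℕ) (hn : 1 ≤ n) (ℓ : Fin n → ℝ)
    (hℓ : ∀ i : Fin n, 0 < ℓ i ∧ ℓ i ≤ 1)
    (σ : Fin n ⊕ Fin n → Option (Fin n)) (hσ : Feasible n ℓ σ)
    (hmax : ∀ τ : Fin n ⊕ Fin n → Option (Fin n), Feasible n ℓ τ →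
      servedCount n τ ≤ servedCount n σ) :
    (itemVehicles n σ).card
        + (Finset.univ.filter (fun i : Fin n => σ (Sum.inl i) = none)).card
      = optBPP n ℓ ∧
    IsBinPacking n ℓ
      ((itemVehicles n σ).image
          (fun v : Fin n => Finset.univ.filter (fun i : Fin n => σ (Sum.inl i) = some v)) ∪
        (Finset.univ.filter (fun i : Fin n => σ (Sum.inl i) = none)).image
          (fun i : Fin n => {i})) ∧
    ((itemVehicles n σ).image
          (fun v : Fin n => Finset.univ.filter (fun i : Fin n => σ (Sum.inl i) = some v)) ∪
        (Finset.univ.filter (fun i : Fin n => σ (Sum.inl i) = none)).image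
          (fun i : Fin n => {i})).card = optBPP n ℓ :=
  stmt_7_general n ℓ hℓ σ hσ hmax
end

section
/- For every integer k with 1 ≤ k ≤ n, the items admit a bin packing into at most k bins if and only if there exists a feasible solution of the reduced EVSP instance that serves at least 2n − k customers. -/
open Finset

lemma card_filter_sum_split {α β : Type*} [Fintype α] [Fintype β]
    (p : α ⊕ β → Prop) [DecidablePred p] :
    (Finset.univ.filter p).card =
      (Finset.univ.filter fun a => p (Sum.inl a)).card +
      (Finset.univ.filter fun b => p (Sum.inr b)).card := by
  rw [← Finset.card_toLeft_add_card_toRight]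
  have h1 : (Finset.univ.filter p).toLeft = Finset.univ.filter fun a => p (Sum.inl a) := by
    ext a; simp
  have h2 : (Finset.univ.filter p).toRight = Finset.univ.filter fun b => p (Sum.inr b) := by
    ext b; simp
  rw [h1, h2]

/-- For every `k` with `1 ≤ k ≤ n`, the items admit a bin packing into at most `k` bins if and
only if there exists a feasible solution of the reduced EVSP instance serving at least
`2 * n - k` customers. -/
theorem stmt_8 (n : ℕ) (hn : 1 ≤ n) (ℓ : Fin n → ℝ)
    (hℓ : ∀ i : Fin n, 0 < ℓ i ∧ ℓ i ≤ 1)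
    (k : ℕ) (hk1 : 1 ≤ k) (hkn : k ≤ n) :
    (∃ P : Finset (Finset (Fin n)), IsBinPacking n ℓ P ∧ P.card ≤ k) ↔
    (∃ σ : Fin n ⊕ Fin n → Option (Fin n), Feasible n ℓ σ ∧
      2 * n - k ≤ servedCount n σ) := by
  classical
  constructor
  · rintro ⟨P, ⟨hne, hsum, huniq⟩, hPk⟩
    have hB : ∀ i : Fin n, ∃ p, p ∈ P ∧ i ∈ p := fun i => (huniq i).exists
    set B : Fin n → Finset (Fin n) := fun i => (hB i).choose with hBdef
    have hBP : ∀ i, B i ∈ P := fun i => (hB i).choose_spec.1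
    have hiB : ∀ i, i ∈ B i := fun i => (hB i).choose_spec.2
    have hBu : ∀ (i : Fin n) (p : Finset (Fin n)), p ∈ P → i ∈ p → p = B i := fun i p hp hip =>
      (huniq i).unique ⟨hp, hip⟩ ⟨hBP i, hiB i⟩
    set rep : Finset (Fin n) → Fin n :=
      fun p => if h : p.Nonempty then p.min' h else ⟨0, hn⟩ with hrep
    have hrepmem : ∀ i, rep (B i) ∈ B i := by
      intro i
      have h : (B i).Nonempty := ⟨i, hiB i⟩
      simp only [hrep, dif_pos h]
      exact Finset.min'_mem _ h
    have hrepinj : ∀ i i', rep (B i) = rep (B i') → B i = B i' := by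
      intro i i' h
      have h1 := hrepmem i
      have h2 := hrepmem i'
      rw [h] at h1
      exact (hBu _ _ (hBP i) h1).trans (hBu _ _ (hBP i') h2).symm
    set σ : Fin n ⊕ Fin n → Option (Fin n) :=
      Sum.elim (fun i => some (rep (B i)))
        (fun j => if ∃ i : Fin n, rep (B i) = j then none else some j) with hσ
    have feas1 : ∀ v : Fin n,
        ∑ i ∈ Finset.univ.filter (fun i : Fin n => σ (Sum.inl i) = some v), ℓ i ≤ 1 := by
      intro v
      by_cases hv : ∃ i0 : Fin n, σ (Sum.inl i0) = some v
      · obtain ⟨i0, hi0⟩ := hv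
        have hsub : Finset.univ.filter (fun i : Fin n => σ (Sum.inl i) = some v) ⊆ B i0 := by
          intro i hi
          simp only [mem_filter] at hi
          have e1 : rep (B i) = v := by
            have := hi.2
            simp only [hσ, Sum.elim_inl, Option.some.injEq] at this
            exact this
          have e2 : rep (B i0) = v := by
            simp only [hσ, Sum.elim_inl, Option.some.injEq] at hi0
            exact hi0
          have : B i = B i0 := hrepinj i i0 (e1.trans e2.symm)
          rw [← this]
          exact hiB i
        calc ∑ i ∈ Finset.univ.filter (fun i : Fin n => σ (Sum.inl i) = some v), ℓ i
            ≤ ∑ i ∈ B i0, ℓ i :=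
              Finset.sum_le_sum_of_subset_of_nonneg hsub (fun i _ _ => (hℓ i).1.le)
          _ ≤ 1 := hsum _ (hBP i0)
      · have he : Finset.univ.filter (fun i : Fin n => σ (Sum.inl i) = some v) = ∅ := by
          rw [Finset.filter_eq_empty_iff]
          exact fun i _ h => hv ⟨i, h⟩
        rw [he]; simp
    have feas2 : ∀ v j : Fin n, σ (Sum.inr j) = some v →
        ∀ c : Fin n ⊕ Fin n, c ≠ Sum.inr j → σ c ≠ some v := by
      intro v j hj c hc
      simp only [hσ, Sum.elim_inr] at hj
      by_cases h : ∃ i : Fin n, rep (B i) = j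
      · rw [if_pos h] at hj
        exact absurd hj (by simp)
      · rw [if_neg h] at hj
        have hv : j = v := Option.some.inj hj
        subst hv
        clear hj
        match c with
        | Sum.inl i =>
          intro hcontra
          simp only [hσ, Sum.elim_inl, Option.some.injEq] at hcontra
          exact h ⟨i, hcontra⟩
        | Sum.inr j' =>
          have hjj : j' ≠ j := fun e => hc (by rw [e])
          simp only [hσ, Sum.elim_inr]
          split_ifs with h'
          · simp
          · intro hcontra
            exact hjj (Option.some.inj hcontra)
    refine ⟨σ, ⟨feas1, feas2⟩, ?_⟩
    rw [servedCount, card_filter_sum_split]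
    have hL : (Finset.univ.filter fun i : Fin n => σ (Sum.inl i) ≠ none) = Finset.univ := by
      apply Finset.filter_true_of_mem
      intro i _
      simp [hσ]
    set S := Finset.univ.image (fun i : Fin n => rep (B i)) with hS
    have hR : (Finset.univ.filter fun j : Fin n => σ (Sum.inr j) ≠ none) =
        Finset.univ \ S := by
      ext j
      simp only [mem_filter, mem_univ, true_and, mem_sdiff, hS, mem_image, hσ, Sum.elim_inr]
      constructor
      · intro hne2
        rintro ⟨i, hi⟩
        exact hne2 (by rw [if_pos ⟨i, hi⟩])
      · intro hh
        rw [if_neg hh]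
        simp
    have hScard : S.card ≤ k := by
      have hsub : S ⊆ P.image rep := by
        intro v hv
        simp only [hS, mem_image] at hv ⊢
        obtain ⟨i, _, hi⟩ := hv
        exact ⟨B i, hBP i, hi⟩
      exact le_trans (Finset.card_le_card hsub) (le_trans Finset.card_image_le hPk)
    rw [hL, hR, Finset.card_sdiff_of_subset (Finset.subset_univ S), Finset.card_univ, Fintype.card_fin]
    have hSn : S.card ≤ n := le_trans (Finset.card_le_card (Finset.subset_univ S))
      (by simp)
    omega
  · rintro ⟨σ, ⟨hfeas1, hfeas2⟩, hserved⟩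
    set U := Finset.univ.filter (fun i : Fin n => σ (Sum.inl i) = none) with hU
    set T := itemVehicles n σ with hT
    set bin : Fin n → Finset (Fin n) :=
      fun v => Finset.univ.filter (fun i : Fin n => σ (Sum.inl i) = some v) with hbin
    set P := T.image bin ∪ U.image (fun i => {i}) with hP
    have hmemP : ∀ p, p ∈ P ↔ (∃ v ∈ T, bin v = p) ∨ (∃ i ∈ U, ({i} : Finset (Fin n)) = p) := by
      intro p
      simp [hP, Finset.mem_union, Finset.mem_image]
    refine ⟨P, ⟨?_, ?_, ?_⟩, ?_⟩
    · intro p hp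
      rcases (hmemP p).1 hp with ⟨v, hv, rfl⟩ | ⟨i, _, rfl⟩
      · simp only [hT, itemVehicles, mem_filter] at hv
        obtain ⟨_, i, hi⟩ := hv
        exact ⟨i, by simp [hbin, hi]⟩
      · exact Finset.singleton_nonempty i
    · intro p hp
      rcases (hmemP p).1 hp with ⟨v, hv, rfl⟩ | ⟨i, _, rfl⟩
      · exact hfeas1 v
      · rw [Finset.sum_singleton]
        exact (hℓ i).2
    · intro i
      by_cases hi : σ (Sum.inl i) = none
      · refine ⟨{i}, ⟨(hmemP _).2 (Or.inr ⟨i, by simp [hU, hi], rfl⟩), by simp⟩, ?_⟩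
        rintro q ⟨hq, hiq⟩
        rcases (hmemP q).1 hq with ⟨v, hv, rfl⟩ | ⟨i', hi', rfl⟩
        · simp only [hbin, mem_filter] at hiq
          rw [hi] at hiq
          exact absurd hiq.2 (by simp)
        · simp only [Finset.mem_singleton] at hiq
          rw [hiq]
      · obtain ⟨v, hv⟩ := Option.ne_none_iff_exists'.mp hi
        refine ⟨bin v, ⟨(hmemP _).2 (Or.inl ⟨v, ?_, rfl⟩), by simp [hbin, hv]⟩, ?_⟩
        · simp only [hT, itemVehicles, mem_filter, mem_univ, true_and]
          exact ⟨i, hv⟩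
        · rintro q ⟨hq, hiq⟩
          rcases (hmemP q).1 hq with ⟨v', hv', rfl⟩ | ⟨i', hi', rfl⟩
          · simp only [hbin, mem_filter] at hiq
            have : v' = v := by
              have := hiq.2
              rw [hv] at this
              exact (Option.some.inj this).symm
            rw [this]
          · simp only [Finset.mem_singleton] at hiq
            subst hiq
            simp only [hU, mem_filter] at hi'
            exact absurd hi'.2 hi
    · -- cardinality bound
      have hcard : P.card ≤ T.card + U.card :=
        le_trans (Finset.card_union_le _ _)
          (add_le_add Finset.card_image_le Finset.card_image_le)
      -- served items + unserved items = n
      have hsplitU : (Finset.univ.filter fun i : Fin n => σ (Sum.inl i) ≠ none).card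
          + U.card = n := by
        rw [hU]
        have := Finset.card_filter_add_card_filter_not
          (s := (Finset.univ : Finset (Fin n)))
          (p := fun i : Fin n => σ (Sum.inl i) ≠ none)
        simp only [not_not] at this
        rw [this, Finset.card_univ, Fintype.card_fin]
      -- T.card + dummyServed ≤ n
      set D := Finset.univ.filter (fun j : Fin n => σ (Sum.inr j) ≠ none) with hD
      set f : Fin n → Fin n := fun j => (σ (Sum.inr j)).getD ⟨0, hn⟩ with hf
      have hfD : ∀ j ∈ D, σ (Sum.inr j) = some (f j) := by
        intro j hj
        simp only [hD, mem_filter] at hj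
        obtain ⟨v, hv⟩ := Option.ne_none_iff_exists'.mp hj.2
        rw [hv]
        simp [hf, hv]
      have hinj : Set.InjOn f D := by
        intro j hj j' hj' hff
        by_contra hne
        have h1 := hfD j hj
        have h2 := hfD j' hj'
        rw [hff] at h1
        exact hfeas2 (f j') j' h2 (Sum.inr j) (by simp [hne]) h1
      have hdisj : ∀ j ∈ D, f j ∉ T := by
        intro j hj hfT
        simp only [hT, itemVehicles, mem_filter] at hfT
        obtain ⟨_, i, hi⟩ := hfT
        exact hfeas2 (f j) j (hfD j hj) (Sum.inl i) (by simp) hi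
      have hTD : T.card + D.card ≤ n := by
        have himg : D.image f ⊆ Finset.univ \ T := by
          intro v hv
          simp only [mem_image] at hv
          obtain ⟨j, hj, rfl⟩ := hv
          exact Finset.mem_sdiff.mpr ⟨mem_univ _, hdisj j hj⟩
        have h1 : D.card ≤ (Finset.univ \ T).card := by
          rw [← Finset.card_image_of_injOn hinj]
          exact Finset.card_le_card himg
        rw [Finset.card_sdiff_of_subset (Finset.subset_univ T), Finset.card_univ, Fintype.card_fin] at h1
        have hTn : T.card ≤ n := le_trans (Finset.card_le_card (Finset.subset_univ T)) (by simp)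
        omega
      have hsc : servedCount n σ =
          (Finset.univ.filter fun i : Fin n => σ (Sum.inl i) ≠ none).card + D.card := by
        rw [servedCount, card_filter_sum_split]
      rw [hsc] at hserved
      omega
end

section
/- In any feasible solution σ of the reduced EVSP instance, the number of served dummy customers plus the number of vehicles that serve at least one item customer is at most n; in particular, each served dummy customer occupies a vehicle of its own, distinct from every vehicle serving item customers. -/
open Finset

/-- In any feasible solution, the number of served dummy customers plus the number of vehicles
serving at least one item customer is at most `n`; in particular, each served dummy customer
occupies a vehicle of its own, distinct from every other customer's vehicle. -/
theorem stmt_9 (n : ℕ) (hn : 1 ≤ n) (ℓ : Fin n → ℝ)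
    (hℓ : ∀ i : Fin n, 0 < ℓ i ∧ ℓ i ≤ 1)
    (σ : Fin n ⊕ Fin n → Option (Fin n)) (hσ : Feasible n ℓ σ) :
    dummyServed n σ + (itemVehicles n σ).card ≤ n ∧
    (∀ j v : Fin n, σ (Sum.inr j) = some v →
      ∀ c : Fin n ⊕ Fin n, c ≠ Sum.inr j → σ c ≠ some v) := by
  refine ⟨?_, fun j v h => hσ.2 v j h⟩
  set S := Finset.univ.filter (fun j : Fin n => σ (Sum.inr j) ≠ none) with hS
  set f : Fin n → Fin n := fun j => (σ (Sum.inr j)).getD ⟨0, hn⟩ with hf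
  have hmem : ∀ j ∈ S, σ (Sum.inr j) = some (f j) := by
    intro j hj
    simp only [hS, Finset.mem_filter] at hj
    cases hval : σ (Sum.inr j) with
    | none => exact absurd hval hj.2
    | some v => simp [hf, hval]
  have hinj : Set.InjOn f S := by
    intro a ha b hb hab
    by_contra hne
    exact hσ.2 (f a) a (hmem a ha) (Sum.inr b) (by simp [Ne.symm hne]) (hab ▸ hmem b hb)
  have hdisj : Disjoint (S.image f) (itemVehicles n σ) := by
    rw [Finset.disjoint_left]
    intro v hv hv'
    simp only [Finset.mem_image] at hv
    obtain ⟨j, hj, rfl⟩ := hv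
    simp only [itemVehicles, Finset.mem_filter] at hv'
    obtain ⟨i, hi⟩ := hv'.2
    exact hσ.2 (f j) j (hmem j hj) (Sum.inl i) (by simp) hi
  have hcard : S.card = (S.image f).card := (Finset.card_image_of_injOn hinj).symm
  calc dummyServed n σ + (itemVehicles n σ).card
      = (S.image f).card + (itemVehicles n σ).card := by rw [dummyServed, ← hcard]
    _ = ((S.image f) ∪ itemVehicles n σ).card := (Finset.card_union_of_disjoint hdisj).symm
    _ ≤ (Finset.univ : Finset (Fin n)).card := Finset.card_le_card (Finset.subset_univ _)
    _ = n := Finset.card_univ.trans (Fintype.card_fin n)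
end
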